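/- Lemma 2: Let p be a probability distribution on {0,…,d−1}, let |φ_k⟩^{BSE} be unit vectors, and consider the unit vector |ψ_a⟩^{ACBSE} = ∑_{k=0}^{d−1} √p_k |k⟩^A |k⟩^C |φ_k⟩^{BSE}. For any conjugate basis {|x̃⟩}_{x=0}^{d−1} of the A system, I(X̃^A:CBS) = H(Z^A) − I(Z^A:E), where I(X̃^A:CBS) is the Holevo quantity of the ensemble of conditional states of C⊗B⊗S given the outcome of the conjugate-basis measurement on A, H(Z^A) = −∑_k p_k log₂ p_k, and I(Z^A:E) = S(∑_k p_k φ_k^E) − ∑_k p_k S(φ_k^E) with φ_k^E the reduced state of |φ_k⟩ on E. -/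

import Mathlib

open Matrix Complex BigOperators Finset
open Kronecker
open scoped ComplexOrder

noncomputable section

/-- ρ is a density operator: positive semidefinite with unit trace. -/
def IsDensity {ι : Type*} [Fintype ι] (ρ : Matrix ι ι ℂ) : Prop :=
  ρ.PosSemidef ∧ ρ.trace = 1

/-- A POVM indexed by `μ` on a system with index set `ι`. -/
def IsPOVM {μ ι : Type*} [Fintype μ] [Fintype ι] [DecidableEq ι]
    (Λ : μ → Matrix ι ι ℂ) : Prop :=
  (∀ m, (Λ m).PosSemidef) ∧ ∑ m, Λ m = 1

/-- Projector |k⟩⟨k| onto a standard basis element. -/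
def stdProj {ι : Type*} [DecidableEq ι] (k : ι) : Matrix ι ι ℂ :=
  Matrix.single k k 1

/-- The standard basis vector |k⟩. -/
def stdVec {ι : Type*} [DecidableEq ι] (k : ι) : ι → ℂ :=
  fun i => if i = k then 1 else 0

/-- Trace norm Tr √(MᴴM). -/
def traceNorm {ι : Type*} [Fintype ι] [DecidableEq ι] (M : Matrix ι ι ℂ) : ℝ :=
  (((Matrix.posSemidef_conjTranspose_mul_self M).1.eigenvectorUnitary : Matrix ι ι ℂ) *
    Matrix.diagonal (((↑) : ℝ → ℂ) ∘ Real.sqrt ∘ (Matrix.posSemidef_conjTranspose_mul_self M).1.eigenvalues) *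
    (star (Matrix.posSemidef_conjTranspose_mul_self M).1.eigenvectorUnitary : Matrix ι ι ℂ)).trace.re

def negMulLog2 (x : ℝ) : ℝ := -(x * Real.logb 2 x)

/-- Shannon entropy in bits. -/
def shannon {α : Type*} [Fintype α] (p : α → ℝ) : ℝ := ∑ a, negMulLog2 (p a)

/-- Conditional Shannon entropy (in bits) of the first component given the second. -/
def condEnt {α β : Type*} [Fintype α] [Fintype β] (p : α × β → ℝ) : ℝ :=
  shannon p - shannon (fun b => ∑ a, p (a, b))

/-- Element |x̃⟩ = (1/√d) ∑ₖ e^{iθₓₖ}|k⟩ of a candidate conjugate basis. -/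
def conjVec (d : ℕ) (θ : Fin d → Fin d → ℝ) (x : Fin d) : Fin d → ℂ :=
  fun k => (Real.sqrt d : ℂ)⁻¹ * Complex.exp (Complex.I * (θ x k : ℂ))

/-- The family of phases θ defines a conjugate (orthonormal) basis. -/
def IsConjBasis (d : ℕ) (θ : Fin d → Fin d → ℝ) : Prop :=
  ∀ x y : Fin d, (∑ k, star (conjVec d θ x k) * conjVec d θ y k) = if x = y then 1 else 0

/-- Projector P̃ₓ = |x̃⟩⟨x̃|. -/
def conjProj (d : ℕ) (θ : Fin d → Fin d → ℝ) (x : Fin d) : Matrix (Fin d) (Fin d) ℂ :=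
  Matrix.vecMulVec (conjVec d θ x) (star (conjVec d θ x))

/-- The canonical maximally entangled vector |Φ_d⟩. -/
def maxEntVec (d : ℕ) : Fin d × Fin d → ℂ :=
  fun P => if P.1 = P.2 then (Real.sqrt d : ℂ)⁻¹ else 0

/-- Density operator of the canonical maximally entangled state Φ_d. -/
def maxEnt (d : ℕ) : Matrix (Fin d × Fin d) (Fin d × Fin d) ℂ :=
  Matrix.vecMulVec (maxEntVec d) (star (maxEntVec d))

/-- Twisting operator U = ∑ⱼₖ Pⱼ ⊗ Pₖ ⊗ Vⱼₖ. -/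
def IsTwisting {d : ℕ} {σ : Type*} [Fintype σ] [DecidableEq σ]
    (U : Matrix (Fin d × (Fin d × σ)) (Fin d × (Fin d × σ)) ℂ) : Prop :=
  ∃ V : Fin d → Fin d → Matrix σ σ ℂ,
    (∀ j k, V j k ∈ Matrix.unitaryGroup σ ℂ) ∧
    U = ∑ j, ∑ k, stdProj j ⊗ₖ (stdProj k ⊗ₖ V j k)

/-- Exact private state γ = U(Φ_d ⊗ ξ)U†. -/
def IsExactPrivate {d : ℕ} {σ : Type*} [Fintype σ] [DecidableEq σ]
    (γ : Matrix (Fin d × (Fin d × σ)) (Fin d × (Fin d × σ)) ℂ) : Prop :=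
  ∃ (U : Matrix (Fin d × (Fin d × σ)) (Fin d × (Fin d × σ)) ℂ) (ξ : Matrix σ σ ℂ),
    IsTwisting U ∧ IsDensity ξ ∧
    γ = U * (Matrix.reindex (Equiv.prodAssoc (Fin d) (Fin d) σ)
      (Equiv.prodAssoc (Fin d) (Fin d) σ) (maxEnt d ⊗ₖ ξ)) * Uᴴ

/-- ε-secret key: within trace distance 2ε of a perfect secret key state. -/
def IsSecretKey (ε : ℝ) {ι ηE : Type*} [Fintype ι] [DecidableEq ι] [Fintype ηE] [DecidableEq ηE]
    (ρ : Matrix (ι × (ι × ηE)) (ι × (ι × ηE)) ℂ) : Prop :=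
  ∃ ρE : Matrix ηE ηE ℂ, IsDensity ρE ∧
    traceNorm (ρ - (Fintype.card ι : ℂ)⁻¹ • ∑ k, stdProj k ⊗ₖ (stdProj k ⊗ₖ ρE)) ≤ 2 * ε

/-- Standard-basis key measurement on systems A and B. -/
def keyMeasured {ι ηE : Type*} [Fintype ι] [DecidableEq ι] [Fintype ηE] [DecidableEq ηE]
    (ρ : Matrix (ι × (ι × ηE)) (ι × (ι × ηE)) ℂ) : Matrix (ι × (ι × ηE)) (ι × (ι × ηE)) ℂ :=
  ∑ j, ∑ k, (stdProj j ⊗ₖ (stdProj k ⊗ₖ (1 : Matrix ηE ηE ℂ))) * ρ *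
    (stdProj j ⊗ₖ (stdProj k ⊗ₖ (1 : Matrix ηE ηE ℂ)))

/-- ε-private state: some (equivalently, every) purification yields an ε-secret key
upon standard-basis key measurement. -/
def IsEpsPrivate (ε : ℝ) {ι σ : Type*} [Fintype ι] [DecidableEq ι] [Fintype σ] [DecidableEq σ]
    (ψ : Matrix (ι × (ι × σ)) (ι × (ι × σ)) ℂ) : Prop :=
  ∃ (dE : ℕ) (v : ι × (ι × (σ × Fin dE)) → ℂ),
    (∀ P Q : ι × (ι × σ),
      (∑ e, v (P.1, (P.2.1, (P.2.2, e))) * star (v (Q.1, (Q.2.1, (Q.2.2, e))))) = ψ P Q) ∧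
    IsSecretKey ε (keyMeasured (Matrix.of fun P Q : ι × (ι × Fin dE) =>
      ∑ s : σ, v (P.1, (P.2.1, (s, P.2.2))) * star (v (Q.1, (Q.2.1, (s, Q.2.2))))))

/-- ε-private state when the eavesdropper additionally holds a public classical register. -/
def IsEpsPrivateGivenPublic (ε : ℝ) {ι σ μR : Type*}
    [Fintype ι] [DecidableEq ι] [Fintype σ] [DecidableEq σ] [Fintype μR] [DecidableEq μR]
    (ψ : Matrix ((ι × (ι × σ)) × μR) ((ι × (ι × σ)) × μR) ℂ) : Prop :=
  ∃ (dE : ℕ) (v : ((ι × (ι × σ)) × μR) × Fin dE → ℂ),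
    (∀ P Q, (∑ e, v (P, e) * star (v (Q, e))) = ψ P Q) ∧
    IsSecretKey ε (keyMeasured (Matrix.of fun P Q : ι × (ι × (μR × Fin dE)) =>
      ∑ s : σ, v (((P.1, (P.2.1, s)), P.2.2.1), P.2.2.2) *
        star (v (((Q.1, (Q.2.1, s)), Q.2.2.1), Q.2.2.2))))

open Classical in
/-- Von Neumann entropy in bits (via eigenvalues; zero on non-Hermitian input). -/
def vonNeumann {ι : Type*} [Fintype ι] [DecidableEq ι] (ρ : Matrix ι ι ℂ) : ℝ :=
  if h : ρ.IsHermitian then ∑ i, negMulLog2 (h.eigenvalues i) else 0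

/-- Unnormalized conditional state on β given measurement of the vector u on ι. -/
def condStateVec {ι β : Type*} [Fintype ι] (u : ι → ℂ)
    (ρ : Matrix (ι × β) (ι × β) ℂ) : Matrix β β ℂ :=
  Matrix.of fun w w' => ∑ a, ∑ a', star (u a) * ρ (a, w) (a', w') * u a'

/-- Outcome probability of the measurement vector u. -/
def measProb {ι β : Type*} [Fintype ι] [Fintype β] (u : ι → ℂ)
    (ρ : Matrix (ι × β) (ι × β) ℂ) : ℝ := (condStateVec u ρ).trace.re

/-- Holevo quantity of the ensemble induced on β by measuring the basis family W on ι. -/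
def holevoB {ι β κm : Type*} [Fintype ι] [Fintype β] [DecidableEq β] [Fintype κm]
    (W : κm → ι → ℂ) (ρ : Matrix (ι × β) (ι × β) ℂ) : ℝ :=
  vonNeumann (∑ x, condStateVec (W x) ρ) -
    ∑ x, measProb (W x) ρ *
      vonNeumann ((((condStateVec (W x) ρ).trace)⁻¹) • condStateVec (W x) ρ)

open Classical in
/-- Positive-semidefinite square root (zero on non-PSD input). -/
def psqrt {ι : Type*} [Fintype ι] [DecidableEq ι] (M : Matrix ι ι ℂ) : Matrix ι ι ℂ :=
  if h : M.PosSemidef then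
    (h.1.eigenvectorUnitary : Matrix ι ι ℂ) * Matrix.diagonal (((↑) : ℝ → ℂ) ∘ Real.sqrt ∘ h.1.eigenvalues) *
      (star h.1.eigenvectorUnitary : Matrix ι ι ℂ) else 0

/-- n-fold tensor (Kronecker) product of a family of matrices. -/
def tensorPow {dB : ℕ} {n : ℕ} (φ : Fin n → Matrix (Fin dB) (Fin dB) ℂ) :
    Matrix (Fin n → Fin dB) (Fin n → Fin dB) ℂ :=
  Matrix.of fun w w' => ∏ i, φ i (w i) (w' i)

/-- n-fold tensor power of a bipartite state, grouped as (Aⁿ) × (Bⁿ). -/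
def tpow {α β : Type*} (ψ : Matrix (α × β) (α × β) ℂ) (n : ℕ) :
    Matrix ((Fin n → α) × (Fin n → β)) ((Fin n → α) × (Fin n → β)) ℂ :=
  Matrix.of fun P Q => ∏ i, ψ (P.1 i, P.2 i) (Q.1 i, Q.2 i)

/-- Output of a one-way protocol with Alice-instrument Kraus operators E and Bob isometries V;
the classical message is kept in a public register. -/
def protoOut {𝒜 ℬ 𝒜' ℬ' M κI : Type*} [Fintype 𝒜] [Fintype ℬ] [Fintype 𝒜'] [Fintype ℬ']
    [Fintype κI] [DecidableEq M]
    (E : M → κI → Matrix 𝒜' 𝒜 ℂ) (V : M → Matrix ℬ' ℬ ℂ)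
    (ρ : Matrix (𝒜 × ℬ) (𝒜 × ℬ) ℂ) : Matrix ((𝒜' × ℬ') × M) ((𝒜' × ℬ') × M) ℂ :=
  Matrix.of fun P Q =>
    if P.2 = Q.2 then
      (∑ i, ((E P.2 i ⊗ₖ V P.2) * ρ * (E P.2 i ⊗ₖ V P.2)ᴴ)) P.1 Q.1
    else 0

/-- Partial trace over the innermost factor. -/
def ptraceInner {α β γ : Type*} [Fintype γ] (M : Matrix (α × (β × γ)) (α × (β × γ)) ℂ) :
    Matrix (α × β) (α × β) ℂ :=
  Matrix.of fun P Q => ∑ c, M (P.1, (P.2, c)) (Q.1, (Q.2, c))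

/-- Partial trace over the first factor. -/
def ptraceL {α β : Type*} [Fintype α] (M : Matrix (α × β) (α × β) ℂ) : Matrix β β ℂ :=
  Matrix.of fun b b' => ∑ a, M (a, b) (a, b')
/-- Dot product of dit strings. -/
def zdot {d n : ℕ} (x y : Fin n → ZMod d) : ZMod d := ∑ a, x a * y a

/-- Syndrome map defined by a family of stabilizer strings. -/
def synMap {d n m : ℕ} (s : Fin m → (Fin n → ZMod d)) (k : Fin n → ZMod d) : Fin m → ZMod d :=
  fun i => zdot (s i) k

/-- Fourier (conjugate) basis vector |x̃⟩ on n qudits, with ω = e^{2πi/d}. -/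
def fourierVec (d n : ℕ) (x : Fin n → ZMod d) : (Fin n → ZMod d) → ℂ :=
  fun k => (Real.sqrt (d ^ n) : ℂ)⁻¹ *
    Complex.exp (2 * Real.pi * Complex.I / d) ^ (zdot x k).val

/-- Fourier basis projector P̃ₓ. -/
def fourierProj (d n : ℕ) (x : Fin n → ZMod d) :
    Matrix (Fin n → ZMod d) (Fin n → ZMod d) ℂ :=
  Matrix.vecMulVec (fourierVec d n x) (star (fourierVec d n x))

/-- Projector onto the span of standard basis vectors with a given classical label. -/
def classProj {K μ : Type*} [Fintype K] [DecidableEq K] [DecidableEq μ] (f : K → μ) (a : μ) :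
    Matrix K K ℂ := ∑ k, if f k = a then stdProj k else 0

/-- Projector Π̃_β onto the span of Fourier basis vectors with phase syndrome β. -/
def phaseProj (d n mx : ℕ) [NeZero d] (t : Fin mx → (Fin n → ZMod d)) (b : Fin mx → ZMod d) :
    Matrix (Fin n → ZMod d) (Fin n → ZMod d) ℂ :=
  ∑ x, if synMap t x = b then fourierProj d n x else 0

/-- The purification vector ∑ₖ √pₖ |k⟩|φₖ⟩. -/
def purVec {K W : Type*} (p : K → ℝ) (φ : K → W → ℂ) : K × W → ℂ :=
  fun P => (Real.sqrt (p P.1) : ℂ) * φ P.1 P.2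

/-- Reduced state on A ⊗ B of the pure state with amplitudes v on A ⊗ (B ⊗ (S ⊗ E)). -/
def redAB {K : Type*} {dB dS dE : ℕ} (v : K × (Fin dB × (Fin dS × Fin dE)) → ℂ) :
    Matrix (K × Fin dB) (K × Fin dB) ℂ :=
  Matrix.of fun P Q => ∑ sS : Fin dS, ∑ e : Fin dE,
    v (P.1, (P.2, (sS, e))) * star (v (Q.1, (Q.2, (sS, e))))

/-- Reduced state on A ⊗ B ⊗ S of the pure state with amplitudes v on A ⊗ (B ⊗ (S ⊗ E)). -/
def redABS {K : Type*} {dB dS dE : ℕ} (v : K × (Fin dB × (Fin dS × Fin dE)) → ℂ) :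
    Matrix (K × (Fin dB × Fin dS)) (K × (Fin dB × Fin dS)) ℂ :=
  Matrix.of fun P Q => ∑ e : Fin dE,
    v (P.1, (P.2.1, (P.2.2, e))) * star (v (Q.1, (Q.2.1, (Q.2.2, e))))

/-- The post-measurement vector |Ψ₂⟩ = ∑_{α,β,k} (Π_α Π̃_β ⊗ √Λ_{α,k} ⊗ 1)|Ψ⟩|k⟩^{B₂}|α⟩^R|β⟩^T,
with index grouping A × ((B × (S × E)) × (B₂ × (R × T))). -/
def oneShotVec {d n mz mx : ℕ} [NeZero d] {dB dS dE : ℕ}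
    (s : Fin mz → (Fin n → ZMod d)) (t : Fin mx → (Fin n → ZMod d))
    (Λ : (Fin mz → ZMod d) → (Fin n → ZMod d) → Matrix (Fin dB) (Fin dB) ℂ)
    (v : (Fin n → ZMod d) × (Fin dB × (Fin dS × Fin dE)) → ℂ) :
    (Fin n → ZMod d) × ((Fin dB × (Fin dS × Fin dE)) ×
      ((Fin n → ZMod d) × ((Fin mz → ZMod d) × (Fin mx → ZMod d)))) → ℂ :=
  fun P =>
    ∑ a' : Fin n → ZMod d, ∑ b' : Fin dB,
      ((classProj (synMap s) P.2.2.2.1 * phaseProj d n mx t P.2.2.2.2) P.1 a') *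
      (psqrt (Λ P.2.2.2.1 P.2.2.1) P.2.1.1 b') *
      v (a', (b', P.2.1.2))

/-- The ccq state obtained from |Ψ₂⟩ by measuring the logical values λ on A and on B₂
(recording them in registers Ā and B̄), and tracing out A, B, S, B₂ and T.
Eve keeps E and the public register R. -/
def oneShotOut {d n mz mx r : ℕ} [NeZero d] {dB dS dE : ℕ}
    (u : Fin r → (Fin n → ZMod d))
    (Ψ2 : (Fin n → ZMod d) × ((Fin dB × (Fin dS × Fin dE)) ×
      ((Fin n → ZMod d) × ((Fin mz → ZMod d) × (Fin mx → ZMod d)))) → ℂ) :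
    Matrix ((Fin r → ZMod d) × ((Fin r → ZMod d) × (Fin dE × (Fin mz → ZMod d))))
           ((Fin r → ZMod d) × ((Fin r → ZMod d) × (Fin dE × (Fin mz → ZMod d)))) ℂ :=
  Matrix.of fun P Q =>
    if P.1 = Q.1 ∧ P.2.1 = Q.2.1 then
      ∑ a : Fin n → ZMod d, ∑ k2 : Fin n → ZMod d, ∑ b : Fin dB,
        ∑ sS : Fin dS, ∑ βr : Fin mx → ZMod d,
        (if synMap u a = P.1 ∧ synMap u k2 = P.2.1 then
          Ψ2 (a, ((b, (sS, P.2.2.1)), (k2, (P.2.2.2, βr)))) *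
          star (Ψ2 (a, ((b, (sS, Q.2.2.1)), (k2, (Q.2.2.2, βr)))))
        else 0)
    else 0

/-- |Ψ₂⟩ = ∑_{k,ℓ} √pₖ |k⟩(√Λ_ℓ ⊗ 1)|φₖ⟩|ℓ⟩: coherent measurement of the POVM Λ. -/
def coherentMeasVec {N dB dE : ℕ} (p : Fin N → ℝ) (φ : Fin N → (Fin dB × Fin dE) → ℂ)
    (Λ : Fin N → Matrix (Fin dB) (Fin dB) ℂ) : Fin N × ((Fin dB × Fin dE) × Fin N) → ℂ :=
  fun P => (Real.sqrt (p P.1) : ℂ) * ∑ b', psqrt (Λ P.2.2) P.2.1.1 b' * φ P.1 (b', P.2.1.2)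

/-- |Ψ₂'⟩ = ∑ₖ √pₖ |k⟩|φₖ⟩|k⟩: perfect copy of the index k. -/
def copyVec {N dB dE : ℕ} (p : Fin N → ℝ) (φ : Fin N → (Fin dB × Fin dE) → ℂ) :
    Fin N × ((Fin dB × Fin dE) × Fin N) → ℂ :=
  fun P => if P.2.2 = P.1 then (Real.sqrt (p P.1) : ℂ) * φ P.1 P.2.1 else 0

/-
Measuring `A` of `ψ_a` in a conjugate basis gives every outcome `x̃` probability `1/d` and leaves
`CBSE` in a pure state. Its `CBS`-marginal therefore has the entropy of its `E`-marginal, and the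
latter is `ρ_E = ∑ₖ pₖ φₖ^E` whatever `x̃` is, because `C` holds a copy of `k` and
`|⟨x̃|k⟩|² = 1/d`. Averaged over outcomes, the phases cancel by orthonormality of the conjugate
basis and `CBS` is left in the block-diagonal state `⊕ₖ pₖ φₖ^{BS}`, of entropy
`H(p) + ∑ₖ pₖ S(φₖ^{BS})`. With `S(φₖ^{BS}) = S(φₖ^E)` (Schmidt decomposition) this gives
`I(X̃:CBS) = H(p) + ∑ₖ pₖ S(φₖ^E) - S(ρ_E) = H(Z) - I(Z:E)`.

Spectra are compared through characteristic polynomials: the nonzero spectra of `NᴴN` and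
`NNᴴ` agree by `Matrix.charpoly_mul_comm'`, and `0` contributes no entropy.
-/

lemma negMulLog2_eq_negMulLog_div (x : ℝ) : negMulLog2 x = Real.negMulLog x / Real.log 2 := by
  simp only [negMulLog2, Real.negMulLog, Real.logb]
  ring

lemma negMulLog2_zero : negMulLog2 0 = 0 := by simp [negMulLog2]

lemma negMulLog2_mul (x y : ℝ) :
    negMulLog2 (x * y) = y * negMulLog2 x + x * negMulLog2 y := by
  simp only [negMulLog2_eq_negMulLog_div, Real.negMulLog_mul]
  ring

open Polynomial in
theorem Matrix.charpoly_blockDiagonal {m o R : Type*} [Fintype m] [DecidableEq m] [Fintype o]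
    [DecidableEq o] [CommRing R] (A : o → Matrix m m R) :
    (blockDiagonal A).charpoly = ∏ k, (A k).charpoly := by
  have : charmatrix (blockDiagonal A) = blockDiagonal fun k => charmatrix (A k) := by
    ext ⟨i, k⟩ ⟨j, k'⟩
    rcases eq_or_ne k k' with rfl | hk
    · simp [charmatrix_apply, blockDiagonal_apply_eq, diagonal_apply]
    · simp [blockDiagonal_apply_ne _ _ _ hk, hk]
  rw [charpoly, this, det_blockDiagonal]
  rfl

lemma Matrix.transpose_mul_conjTranspose_self {m n : Type*} [Fintype n] (G : Matrix m n ℂ) :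
    (G * Gᴴ)ᵀ = Gᵀᴴ * Gᵀ := by
  rw [transpose_mul, conjTranspose_transpose, transpose_conjTranspose]

lemma Matrix.trace_mul_conjTranspose_self {m n : Type*} [Fintype m] [Fintype n] (G : Matrix m n ℂ) :
    (G * Gᴴ).trace = ∑ i, ∑ j, (Complex.normSq (G i j) : ℂ) := by
  simp [trace, mul_apply, Complex.mul_conj]

lemma Complex.ofReal_sqrt_mul_self {r : ℝ} (hr : 0 ≤ r) :
    (Real.sqrt r : ℂ) * (Real.sqrt r : ℂ) = r := by
  rw [← Complex.ofReal_mul, Real.mul_self_sqrt hr]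

section VonNeumann

variable {ι κ : Type*} [Fintype ι] [DecidableEq ι] [Fintype κ] [DecidableEq κ]

lemma vonNeumann_eq_sum_roots_charpoly {A : Matrix ι ι ℂ} (hA : A.IsHermitian) :
    vonNeumann A = (A.charpoly.roots.map fun z => negMulLog2 z.re).sum := by
  rw [vonNeumann, dif_pos hA, hA.roots_charpoly_eq_eigenvalues, Multiset.map_map]
  rfl

lemma vonNeumann_transpose (A : Matrix ι ι ℂ) : vonNeumann Aᵀ = vonNeumann A := by
  by_cases hA : A.IsHermitian
  · rw [vonNeumann_eq_sum_roots_charpoly hA, vonNeumann_eq_sum_roots_charpoly hA.transpose,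
      charpoly_transpose]
  · rw [vonNeumann, vonNeumann, dif_neg hA, dif_neg (mt isHermitian_transpose_iff.mp hA)]

lemma vonNeumann_submatrix_equiv (A : Matrix ι ι ℂ) (e : κ ≃ ι) :
    vonNeumann (A.submatrix e e) = vonNeumann A := by
  by_cases hA : A.IsHermitian
  · rw [vonNeumann_eq_sum_roots_charpoly hA, vonNeumann_eq_sum_roots_charpoly (hA.submatrix e),
      ← charpoly_reindex e.symm A]
    rfl
  · have hA' : ¬(A.submatrix e e).IsHermitian := fun h => hA (by
      simpa using h.submatrix e.symm)
    rw [vonNeumann, vonNeumann, dif_neg hA, dif_neg hA']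

lemma vonNeumann_conjTranspose_mul_self (N : Matrix ι κ ℂ) :
    vonNeumann (Nᴴ * N) = vonNeumann (N * Nᴴ) := by
  have hroots := congrArg Polynomial.roots (charpoly_mul_comm' N Nᴴ)
  rw [Polynomial.roots_mul (mul_ne_zero (pow_ne_zero _ Polynomial.X_ne_zero)
      (charpoly_monic _).ne_zero), Polynomial.roots_mul (mul_ne_zero
      (pow_ne_zero _ Polynomial.X_ne_zero) (charpoly_monic _).ne_zero), Polynomial.roots_X_pow,
    Polynomial.roots_X_pow] at hroots
  have hsum := congrArg (fun s => (s.map fun z : ℂ => negMulLog2 z.re).sum) hroots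
  simp only [Multiset.map_add, Multiset.sum_add, Multiset.map_nsmul, Multiset.sum_nsmul,
    Multiset.map_singleton, Multiset.sum_singleton, Complex.zero_re, negMulLog2_zero, smul_zero,
    zero_add] at hsum
  rw [vonNeumann_eq_sum_roots_charpoly (isHermitian_conjTranspose_mul_self N),
    vonNeumann_eq_sum_roots_charpoly (isHermitian_mul_conjTranspose_self N), hsum]

lemma vonNeumann_cfc {A : Matrix ι ι ℂ} (hA : A.IsHermitian) (f : ℝ → ℝ) :
    vonNeumann (cfc f A) = ∑ i, negMulLog2 (f (hA.eigenvalues i)) := by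
  have hf : (cfc f A).IsHermitian := cfc_predicate f A
  rw [vonNeumann_eq_sum_roots_charpoly hf, hA.charpoly_cfc_eq,
    Polynomial.roots_prod _ _ (Finset.prod_ne_zero_iff.mpr fun i _ => Polynomial.X_sub_C_ne_zero _),
    Multiset.map_bind, Multiset.sum_bind]
  simp only [Polynomial.roots_X_sub_C, Multiset.map_singleton, Multiset.sum_singleton]
  rfl

lemma vonNeumann_real_smul {A : Matrix ι ι ℂ} (hA : A.IsHermitian) (htr : A.trace = 1) (r : ℝ) :
    vonNeumann ((r : ℂ) • A) = negMulLog2 r + r * vonNeumann A := by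
  have hsum : ∑ i, hA.eigenvalues i = 1 := by
    have h := congrArg Complex.re hA.trace_eq_sum_eigenvalues
    simpa [htr] using h.symm
  rw [Complex.coe_smul, ← cfc_const_mul_id (p := IsSelfAdjoint) r A hA, vonNeumann_cfc hA,
    vonNeumann, dif_pos hA]
  simp only [negMulLog2_mul, Finset.sum_add_distrib, ← Finset.sum_mul, ← Finset.mul_sum, hsum]
  ring

lemma vonNeumann_blockDiagonal {o : Type*} [Fintype o] [DecidableEq o] (A : o → Matrix ι ι ℂ)
    (hA : ∀ k, (A k).IsHermitian) :
    vonNeumann (blockDiagonal A) = ∑ k, vonNeumann (A k) := by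
  have hblock : (blockDiagonal A).IsHermitian := by
    rw [IsHermitian, blockDiagonal_conjTranspose]
    exact congrArg blockDiagonal (funext fun k => hA k)
  rw [vonNeumann_eq_sum_roots_charpoly hblock, charpoly_blockDiagonal,
    Polynomial.roots_prod _ _ (Finset.prod_ne_zero_iff.mpr fun k _ => (charpoly_monic _).ne_zero),
    Multiset.map_bind, Multiset.sum_bind]
  simp only [vonNeumann_eq_sum_roots_charpoly (hA _)]
  rfl

lemma vonNeumann_blockDiagonal_smul {o : Type*} [Fintype o] [DecidableEq o] (p : o → ℝ)
    {σ : o → Matrix ι ι ℂ} (hσ : ∀ k, (σ k).IsHermitian) (htr : ∀ k, (σ k).trace = 1) :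
    vonNeumann (blockDiagonal fun k => (p k : ℂ) • σ k) =
      shannon p + ∑ k, p k * vonNeumann (σ k) := by
  rw [vonNeumann_blockDiagonal _ fun k => (hσ k).smul (Complex.conj_ofReal (p k))]
  simp only [vonNeumann_real_smul (hσ _) (htr _), Finset.sum_add_distrib]
  rfl

lemma vonNeumann_transpose_mul_conjTranspose (G : Matrix ι κ ℂ) :
    vonNeumann (Gᵀ * Gᵀᴴ) = vonNeumann (G * Gᴴ) := by
  rw [← vonNeumann_conjTranspose_mul_self, ← transpose_mul_conjTranspose_self, vonNeumann_transpose]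

end VonNeumann

lemma holevoB_eq_of_condStateVec_eq_smul {ι β κ : Type*} [Fintype ι] [Fintype β]
    [DecidableEq β] [Fintype κ] {W : κ → ι → ℂ} {ρ : Matrix (ι × β) (ι × β) ℂ}
    (r : κ → ℝ) (σ : κ → Matrix β β ℂ) (hcond : ∀ x, condStateVec (W x) ρ = (r x : ℂ) • σ x)
    (htr : ∀ x, (σ x).trace = 1) :
    holevoB W ρ = vonNeumann (∑ x, condStateVec (W x) ρ) - ∑ x, r x * vonNeumann (σ x) := by
  rw [holevoB]
  congr 1
  refine Finset.sum_congr rfl fun x _ => ?_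
  have hprob : (condStateVec (W x) ρ).trace = r x := by
    rw [hcond, trace_smul, htr, smul_eq_mul, mul_one]
  rw [measProb, hprob, Complex.ofReal_re]
  rcases eq_or_ne (r x) 0 with h | h
  · simp [h]
  · rw [hcond, smul_smul, inv_mul_cancel₀ (Complex.ofReal_ne_zero.mpr h), one_smul]

lemma conjVec_mul_star (d : ℕ) (θ : Fin d → Fin d → ℝ) (x k : Fin d) :
    conjVec d θ x k * star (conjVec d θ x k) = (d : ℂ)⁻¹ := by
  rw [Complex.star_def, Complex.mul_conj, conjVec, Complex.normSq_mul, Complex.normSq_inv,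
    Complex.normSq_ofReal, Real.mul_self_sqrt d.cast_nonneg, Complex.normSq_eq_norm_sq,
    mul_comm Complex.I, Complex.norm_exp_ofReal_mul_I]
  simp

lemma IsConjBasis.sum_star_mul_conjVec {d : ℕ} {θ : Fin d → Fin d → ℝ} (hθ : IsConjBasis d θ)
    (c c' : Fin d) :
    ∑ x, star (conjVec d θ x c) * conjVec d θ x c' = if c = c' then 1 else 0 := by
  set V : Matrix (Fin d) (Fin d) ℂ := of fun k x => conjVec d θ x k
  have hV : Vᴴ * V = 1 := by
    ext x y
    simpa [V, mul_apply, one_apply] using hθ x y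
  have := congrArg (fun M : Matrix (Fin d) (Fin d) ℂ => M c' c) (mul_eq_one_comm.mp hV)
  simp only [V, mul_apply, conjTranspose_apply, of_apply, one_apply] at this
  simpa [mul_comm, eq_comm] using this

section PurifiedState

variable {d dB dS dE : ℕ} (p : Fin d → ℝ) (φ : Fin d → (Fin dB × (Fin dS × Fin dE)) → ℂ)
  (θ : Fin d → Fin d → ℝ)

def ampMatrix (k : Fin d) : Matrix (Fin dB × Fin dS) (Fin dE) ℂ :=
  of fun bs e => φ k (bs.1, (bs.2, e))

def stateACBS : Matrix (Fin d × (Fin d × (Fin dB × Fin dS)))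
    (Fin d × (Fin d × (Fin dB × Fin dS))) ℂ :=
  of fun P Q =>
    if P.2.1 = P.1 ∧ Q.2.1 = Q.1 then
      ((Real.sqrt (p P.1) : ℂ) * (Real.sqrt (p Q.1) : ℂ)) *
        ∑ e, φ P.1 (P.2.2.1, (P.2.2.2, e)) * star (φ Q.1 (Q.2.2.1, (Q.2.2.2, e)))
    else 0

def stateAE : Matrix (Fin d × Fin dE) (Fin d × Fin dE) ℂ :=
  of fun P Q =>
    ∑ c : Fin d, ∑ b : Fin dB, ∑ sS : Fin dS,
      (if c = P.1 then (Real.sqrt (p P.1) : ℂ) * φ P.1 (b, (sS, P.2)) else 0) *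
      star (if c = Q.1 then (Real.sqrt (p Q.1) : ℂ) * φ Q.1 (b, (sS, Q.2)) else 0)

def reducedBS (k : Fin d) : Matrix (Fin dB × Fin dS) (Fin dB × Fin dS) ℂ :=
  ampMatrix φ k * (ampMatrix φ k)ᴴ

def reducedE (k : Fin d) : Matrix (Fin dE) (Fin dE) ℂ :=
  (ampMatrix φ k)ᵀ * (ampMatrix φ k)ᵀᴴ

/-- The normalized post-measurement amplitude of outcome `x̃` on `A`, as a `CBS × E` matrix. -/
def conjAmp (x : Fin d) : Matrix (Fin d × (Fin dB × Fin dS)) (Fin dE) ℂ :=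
  of fun w e => (Real.sqrt d : ℂ) * star (conjVec d θ x w.1) * (Real.sqrt (p w.1) : ℂ) *
    φ w.1 (w.2.1, (w.2.2, e))

variable {p φ θ}

lemma trace_reducedBS (hφ : ∀ k, ∑ w, Complex.normSq (φ k w) = 1) (k : Fin d) :
    (reducedBS φ k).trace = 1 := by
  rw [reducedBS, trace_mul_conjTranspose_self]
  simpa [ampMatrix, Fintype.sum_prod_type] using congrArg (fun r : ℝ => (r : ℂ)) (hφ k)

lemma trace_reducedE (hφ : ∀ k, ∑ w, Complex.normSq (φ k w) = 1) (k : Fin d) :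
    (reducedE φ k).trace = 1 := by
  rw [reducedE, trace_mul_comm, ← transpose_mul_conjTranspose_self, trace_transpose,
    ← reducedBS, trace_reducedBS hφ]

lemma vonNeumann_reducedE (k : Fin d) : vonNeumann (reducedE φ k) = vonNeumann (reducedBS φ k) :=
  vonNeumann_transpose_mul_conjTranspose _

lemma condStateVec_stdVec_stateAE (hp0 : ∀ k, 0 ≤ p k) (k : Fin d) :
    condStateVec (stdVec k) (stateAE p φ) = (p k : ℂ) • reducedE φ k := by
  ext e e'
  simp only [reducedE, condStateVec, stdVec, RCLike.star_def, MonoidWithZeroHom.map_ite_one_zero,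
    stateAE, ite_mul, zero_mul, Finset.sum_ite_irrel, Finset.sum_const_zero, Finset.sum_ite_eq',
    Finset.mem_univ, ↓reduceIte, of_apply, Finset.mul_sum, one_mul, mul_ite, mul_one, mul_zero,
    map_mul, Complex.conj_ofReal, ampMatrix, Matrix.smul_apply, mul_apply, transpose_apply,
    conjTranspose_apply, Fintype.sum_prod_type, smul_eq_mul]
  refine Finset.sum_congr rfl fun b _ => Finset.sum_congr rfl fun s _ => ?_
  rw [← Complex.ofReal_sqrt_mul_self (hp0 k)]
  ring

lemma condStateVec_stateACBS_apply (u : Fin d → ℂ) (w w' : Fin d × (Fin dB × Fin dS)) :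
    condStateVec u (stateACBS p φ) w w' =
      star (u w.1) * u w'.1 * ((Real.sqrt (p w.1) : ℂ) * (Real.sqrt (p w'.1) : ℂ)) *
        ∑ e, φ w.1 (w.2.1, (w.2.2, e)) * star (φ w'.1 (w'.2.1, (w'.2.2, e))) := by
  simp only [condStateVec, stateACBS, of_apply]
  rw [Finset.sum_eq_single w.1 (fun a _ ha => Finset.sum_eq_zero fun a' _ => by
      rw [if_neg fun h => ha h.1.symm, mul_zero, zero_mul]) (by simp),
    Finset.sum_eq_single w'.1 (fun a' _ ha' => by
      rw [if_neg fun h => ha' h.2.symm, mul_zero, zero_mul]) (by simp), if_pos ⟨rfl, rfl⟩]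
  ring

lemma condStateVec_conjVec_stateACBS (hd : 0 < d) (x : Fin d) :
    condStateVec (conjVec d θ x) (stateACBS p φ) =
      (((d : ℝ)⁻¹ : ℝ) : ℂ) • (conjAmp p φ θ x * (conjAmp p φ θ x)ᴴ) := by
  ext w w'
  have hsqrt : 1 = (((d : ℝ)⁻¹ : ℝ) : ℂ) * (Real.sqrt d : ℂ) * (Real.sqrt d : ℂ) := by
    rw [mul_assoc, Complex.ofReal_sqrt_mul_self d.cast_nonneg, Complex.ofReal_inv]
    exact (inv_mul_cancel₀ (by exact_mod_cast hd.ne')).symm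
  simp only [condStateVec_stateACBS_apply, conjAmp, Matrix.smul_apply, mul_apply,
    conjTranspose_apply, of_apply, smul_eq_mul, Finset.mul_sum, star_mul', Complex.star_def,
    Complex.conj_conj, Complex.conj_ofReal]
  refine Finset.sum_congr rfl fun e _ => ?_
  linear_combination (starRingEnd ℂ (conjVec d θ x w.1) * conjVec d θ x w'.1 *
    (Real.sqrt (p w.1) : ℂ) * (Real.sqrt (p w'.1) : ℂ) * φ w.1 (w.2.1, (w.2.2, e)) *
    starRingEnd ℂ (φ w'.1 (w'.2.1, (w'.2.2, e)))) * hsqrt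

lemma conjAmp_conjTranspose_mul_self (hd : 0 < d) (hp0 : ∀ k, 0 ≤ p k) (x : Fin d) :
    (conjAmp p φ θ x)ᴴ * conjAmp p φ θ x = (∑ k, (p k : ℂ) • reducedE φ k)ᵀ := by
  ext e e'
  have hphase : ∀ c, (Real.sqrt d : ℂ) * conjVec d θ x c *
      ((Real.sqrt d : ℂ) * starRingEnd ℂ (conjVec d θ x c)) = 1 := fun c => by
    rw [mul_mul_mul_comm, Complex.ofReal_sqrt_mul_self d.cast_nonneg, ← Complex.star_def,
      conjVec_mul_star]
    exact mul_inv_cancel₀ (by exact_mod_cast hd.ne')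
  simp only [reducedE, conjAmp, RCLike.star_def, mul_apply, conjTranspose_apply, of_apply,
    star_mul', Complex.conj_ofReal, Complex.conj_conj, Fintype.sum_prod_type, ampMatrix,
    Complex.coe_smul, transpose_apply, Matrix.sum_apply, Matrix.smul_apply, Complex.real_smul,
    Finset.mul_sum]
  refine Finset.sum_congr rfl fun c _ => Finset.sum_congr rfl fun b _ =>
    Finset.sum_congr rfl fun s _ => ?_
  linear_combination ((Real.sqrt (p c) : ℂ) * (Real.sqrt (p c) : ℂ) *
      (starRingEnd ℂ (φ c (b, (s, e))) * φ c (b, (s, e')))) * hphase c +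
    (φ c (b, (s, e')) * starRingEnd ℂ (φ c (b, (s, e)))) * Complex.ofReal_sqrt_mul_self (hp0 c)

lemma sum_condStateVec_conjVec_stateACBS (hθ : IsConjBasis d θ) (hp0 : ∀ k, 0 ≤ p k) :
    ∑ x, condStateVec (conjVec d θ x) (stateACBS p φ) =
      (blockDiagonal fun c => (p c : ℂ) • reducedBS φ c).submatrix
        (Equiv.prodComm _ _) (Equiv.prodComm _ _) := by
  ext w w'
  simp only [Matrix.sum_apply, condStateVec_stateACBS_apply, ← Finset.sum_mul,
    hθ.sum_star_mul_conjVec]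
  obtain ⟨c, bs⟩ := w
  obtain ⟨c', bs'⟩ := w'
  rcases eq_or_ne c c' with rfl | h
  · simp only [submatrix_apply, Equiv.prodComm_apply, Prod.swap_prod_mk, blockDiagonal_apply_eq,
      if_pos, one_mul, Matrix.smul_apply, reducedBS, ampMatrix, mul_apply, conjTranspose_apply,
      of_apply, smul_eq_mul, Complex.ofReal_sqrt_mul_self (hp0 c)]
  · simp only [submatrix_apply, Equiv.prodComm_apply, Prod.swap_prod_mk,
      blockDiagonal_apply_ne _ _ _ h, if_neg h, zero_mul]

end PurifiedState

/-- **Lemma 2.** For |ψ_a⟩ = ∑ₖ √pₖ|k⟩^A|k⟩^C|φₖ⟩^{BSE} and any conjugate basis of A,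
I(X̃^A:CBS) = H(Z^A) - I(Z^A:E). -/
theorem conjugate_holevo_identity
    {d dB dS dE : ℕ} (hd : 0 < d)
    (p : Fin d → ℝ) (hp0 : ∀ k, 0 ≤ p k) (hp1 : ∑ k, p k = 1)
    (φ : Fin d → (Fin dB × (Fin dS × Fin dE)) → ℂ)
    (hφ : ∀ k, ∑ w, Complex.normSq (φ k w) = 1)
    (θ : Fin d → Fin d → ℝ) (hθ : IsConjBasis d θ) :
    holevoB (conjVec d θ)
      (Matrix.of fun P Q : Fin d × (Fin d × (Fin dB × Fin dS)) =>
        if P.2.1 = P.1 ∧ Q.2.1 = Q.1 then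
          ((Real.sqrt (p P.1) : ℂ) * (Real.sqrt (p Q.1) : ℂ)) *
            ∑ e, φ P.1 (P.2.2.1, (P.2.2.2, e)) * star (φ Q.1 (Q.2.2.1, (Q.2.2.2, e)))
        else 0)
    = shannon p -
      holevoB stdVec
        (Matrix.of fun P Q : Fin d × Fin dE =>
          ∑ c : Fin d, ∑ b : Fin dB, ∑ sS : Fin dS,
            (if c = P.1 then (Real.sqrt (p P.1) : ℂ) * φ P.1 (b, (sS, P.2)) else 0) *
            star (if c = Q.1 then (Real.sqrt (p Q.1) : ℂ) * φ Q.1 (b, (sS, Q.2)) else 0)) := by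
  have hρE : (∑ k, (p k : ℂ) • reducedE φ k).trace = 1 := by
    simp only [trace_sum, trace_smul, trace_reducedE hφ, smul_eq_mul, mul_one]
    exact_mod_cast hp1
  have hσ (x : Fin d) : (conjAmp p φ θ x * (conjAmp p φ θ x)ᴴ).trace = 1 := by
    rw [trace_mul_comm, conjAmp_conjTranspose_mul_self hd hp0, trace_transpose, hρE]
  have hSσ (x : Fin d) : vonNeumann (conjAmp p φ θ x * (conjAmp p φ θ x)ᴴ) =
      vonNeumann (∑ k, (p k : ℂ) • reducedE φ k) := by
    rw [← vonNeumann_conjTranspose_mul_self, conjAmp_conjTranspose_mul_self hd hp0,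
      vonNeumann_transpose]
  change holevoB (conjVec d θ) (stateACBS p φ) = shannon p - holevoB stdVec (stateAE p φ)
  rw [holevoB_eq_of_condStateVec_eq_smul _ _ (condStateVec_conjVec_stateACBS hd) hσ,
    holevoB_eq_of_condStateVec_eq_smul _ _ (condStateVec_stdVec_stateAE hp0) (trace_reducedE hφ),
    sum_condStateVec_conjVec_stateACBS hθ hp0,
    vonNeumann_submatrix_equiv _ (Equiv.prodComm _ _),
    vonNeumann_blockDiagonal_smul p (σ := reducedBS φ)
      (fun k => isHermitian_mul_conjTranspose_self _) (trace_reducedBS hφ)]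
  simp only [condStateVec_stdVec_stateAE hp0, hSσ, vonNeumann_reducedE,
    Finset.sum_const, Finset.card_univ, Fintype.card_fin, nsmul_eq_mul]
  field_simp
  ring
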